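/- arXiv:1603.03301 — 3 statements merged into one kernel-verified Lean document; each statement's English description precedes it below -/
import Mathlib

section
/- The van der Waerden number W(3,2) equals 9: every 2-coloring of {0,...,8} has a monochromatic 3-term arithmetic progression, and there exists a 2-coloring of {0,...,7} with no monochromatic 3-term arithmetic progression. -/
/-!
Both bounds are finite checks once `monoAP` is decidable: the colouring `00110011` of
`{0,…,7}` has no monochromatic 3-term progression, and the kernel verifies by exhaustion that
each of the `2⁹` colourings of `{0,…,8}` has one.
-/

/-- `monoAP χ k` : the coloring `χ` of `{0,…,n-1}` contains a monochromatic
arithmetic progression of length `k` with positive common difference. -/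
def monoAP {n : ℕ} {α : Type*} (χ : Fin n → α) (k : ℕ) : Prop :=
  ∃ a d : ℕ, 0 < d ∧ ∃ h : a + (k - 1) * d < n,
    ∀ i : ℕ, ∀ hi : i < k,
      χ ⟨a + i * d, by
        have hle : i * d ≤ (k - 1) * d := Nat.mul_le_mul_right d (by omega)
        omega⟩ = χ ⟨a, by omega⟩

/-- `hasVdW N k r` : every `r`-coloring of `{0,…,N-1}` contains a monochromatic
arithmetic progression of length `k`. -/
def hasVdW (N k r : ℕ) : Prop := ∀ χ : Fin N → Fin r, monoAP χ k

/-- The van der Waerden number `W(k,r)`: the least `N` such that every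
`r`-coloring of `{0,…,N-1}` contains a monochromatic length-`k` AP. -/
noncomputable def W (k r : ℕ) : ℕ := sInf {N | hasVdW N k r}

section monoAP

variable {n k : ℕ} {α : Type*}

lemma add_mul_lt_of_lt_of_add_pred_mul_lt {a d i : ℕ} (hi : i < k) (h : a + (k - 1) * d < n) :
    a + i * d < n :=
  (Nat.add_le_add_left (Nat.mul_le_mul_right d (Nat.le_pred_of_lt hi)) a).trans_lt h

/-- Bounding the difference by `n` makes all quantifiers finite: a progression of length `k ≥ 2`
already has `d < n`, and for `k ≤ 1` the difference is irrelevant. -/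
theorem monoAP_iff_exists_fin (χ : Fin n → α) :
    monoAP χ k ↔ ∃ a : Fin n, ∃ d : Fin (n + 1), 0 < (d : ℕ) ∧
      ∃ h : (a : ℕ) + (k - 1) * d < n, ∀ i : Fin k,
        χ ⟨a + i * d, add_mul_lt_of_lt_of_add_pred_mul_lt i.2 h⟩ = χ a := by
  constructor
  · rintro ⟨a, d, hd, h, hmono⟩
    have ha : a < n := by omega
    have hmin : 0 < min d n := by omega
    refine ⟨⟨a, ha⟩, ⟨min d n, by omega⟩, hmin, ?_, fun i => ?_⟩
    · exact (Nat.add_le_add_left (Nat.mul_le_mul_left _ (min_le_left d n)) a).trans_lt h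
    · have hid : (i : ℕ) * min d n = i * d := by
        rcases Nat.eq_zero_or_pos i with hi0 | hipos
        · simp [hi0]
        · have : d ≤ (k - 1) * d := Nat.le_mul_of_pos_left d (by omega)
          rw [min_eq_left (by omega)]
      convert hmono i i.2 using 3
      simp only [hid]
  · rintro ⟨a, d, hd, h, hmono⟩
    exact ⟨a, d, hd, h, fun i hi => hmono ⟨i, hi⟩⟩

instance [DecidableEq α] (χ : Fin n → α) : Decidable (monoAP χ k) :=
  decidable_of_iff _ (monoAP_iff_exists_fin χ).symm

lemma monoAP.of_comp_castLE {m : ℕ} (hnm : n ≤ m) {χ : Fin m → α}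
    (h : monoAP (χ ∘ Fin.castLE hnm) k) : monoAP χ k := by
  obtain ⟨a, d, hd, h, hmono⟩ := h
  exact ⟨a, d, hd, h.trans_le hnm, hmono⟩

end monoAP

lemma not_hasVdW_of_le {n m k r : ℕ} (hnm : n ≤ m) (χ : Fin m → Fin r) (hχ : ¬ monoAP χ k) :
    ¬ hasVdW n k r :=
  fun hn => hχ ((hn _).of_comp_castLE hnm)

theorem W_eq_succ {N k r : ℕ} (hN : hasVdW (N + 1) k r) (χ : Fin N → Fin r)
    (hχ : ¬ monoAP χ k) : W k r = N + 1 := by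
  refine le_antisymm (Nat.sInf_le hN) (le_csInf ⟨_, hN⟩ fun M hM => ?_)
  by_contra! hlt
  exact not_hasVdW_of_le (Nat.le_of_lt_succ hlt) χ hχ hM

set_option maxRecDepth 10000 in
theorem vdW_three_two_eq_nine :
    W 3 2 = 9 ∧ (∀ χ : Fin 9 → Fin 2, monoAP χ 3) ∧
      (∃ χ : Fin 8 → Fin 2, ¬ monoAP χ 3) := by
  have h9 : hasVdW 9 3 2 := by
    unfold hasVdW
    decide
  have h8 : ¬ monoAP (![0, 0, 1, 1, 0, 0, 1, 1] : Fin 8 → Fin 2) 3 := by decide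
  exact ⟨W_eq_succ h9 _ h8, h9, _, h8⟩
end

section
/- There exists a 2-coloring of {0,...,33} with no monochromatic arithmetic progression of length 4; hence W(4,2) > 34. Explicitly, color position n (for n not divisible by 11) by the parity of the discrete logarithm of n mod 11 base 2, and color positions 0, 11, 22, 33 with colors that are not all equal (e.g., B, B, B, G). -/
/-- The coloring of `{0,…,33}` from Rabung's construction with `p = 11`:
off multiples of 11, color by the parity of the discrete log base 2 of the
residue mod 11 (blue `0` at residues 1,3,4,5,9); the multiples 0, 11, 22 get
blue and 33 gets green, so they are not all equal. -/
def rabungW42 : Fin 34 → Fin 2 := fun n =>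
  if 11 ∣ n.val then (if n.val = 33 then 1 else 0)
  else if n.val % 11 = 1 ∨ n.val % 11 = 3 ∨ n.val % 11 = 4 ∨ n.val % 11 = 5 ∨ n.val % 11 = 9
    then 0 else 1

/-! The coloring is AP-free by exhaustive search, since `monoAP` is decidable. For the bound on
`W 4 2` the defining set must be nonempty, as `sInf ∅ = 0`: this is the finitary van der Waerden
theorem, obtained from Hales–Jewett by summing the coordinates of a monochromatic combinatorial
line in `ι → Fin (k + 1)`, which gives an arithmetic progression with difference the number of
moving coordinates. -/

open Combinatorics Finset

/-- Bounding the difference by `n + 1` loses nothing: a longer step only fits if `k ≤ 1`. -/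
theorem monoAP_iff_bounded {n : ℕ} {α : Type*} (χ : Fin n → α) (k : ℕ) :
    monoAP χ k ↔ ∃ a < n, ∃ d < n + 1, 0 < d ∧ ∃ h : a + (k - 1) * d < n,
      ∀ i : ℕ, ∀ hi : i < k,
        χ ⟨a + i * d, by
          have hle : i * d ≤ (k - 1) * d := Nat.mul_le_mul_right d (by omega)
          omega⟩ = χ ⟨a, by omega⟩ := by
  constructor
  · rintro ⟨a, d, hd, h, hall⟩
    by_cases hdn : d < n + 1
    · exact ⟨a, by omega, d, hdn, hd, h, hall⟩
    · have hk : k - 1 = 0 := by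
        by_contra hk
        have : d ≤ (k - 1) * d := Nat.le_mul_of_pos_left d (Nat.pos_of_ne_zero hk)
        omega
      refine ⟨a, by omega, 1, by omega, one_pos, by omega, fun i hi => ?_⟩
      obtain rfl : i = 0 := by omega
      simp
  · rintro ⟨a, -, d, -, hd, h, hall⟩
    exact ⟨a, d, hd, h, hall⟩

instance {n : ℕ} {α : Type*} [DecidableEq α] (χ : Fin n → α) (k : ℕ) : Decidable (monoAP χ k) :=
  decidable_of_iff _ (monoAP_iff_bounded χ k).symm

set_option maxRecDepth 1000 in
theorem not_monoAP_rabungW42 : ¬ monoAP rabungW42 4 := by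
  decide

theorem hasVdW.mono {N M k r : ℕ} (h : hasVdW N k r) (hNM : N ≤ M) : hasVdW M k r := by
  intro χ
  obtain ⟨a, d, hd, hlt, hall⟩ := h fun x => χ (Fin.castLE hNM x)
  exact ⟨a, d, hd, by omega, hall⟩

theorem Combinatorics.Line.sum_val_apply {k : ℕ} {ι : Type*} [Fintype ι] (l : Line (Fin k) ι)
    (x : Fin k) :
    ∑ i, (l x i : ℕ) = ∑ i, ((l.idxFun i).map Fin.val).getD 0 + x * #{i | l.idxFun i = none} := by
  have hcoord : ∀ i, (l x i : ℕ) =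
      ((l.idxFun i).map Fin.val).getD 0 + if l.idxFun i = none then (x : ℕ) else 0 := by
    intro i
    rw [Line.coe_apply]
    cases l.idxFun i <;> simp
  rw [Finset.sum_congr rfl fun i _ => hcoord i, sum_add_distrib, ← sum_filter, sum_const,
    smul_eq_mul, mul_comm]

theorem exists_hasVdW (k r : ℕ) : ∃ N, hasVdW N k r := by
  cases k with
  | zero => exact ⟨1, fun _ => ⟨0, 1, one_pos, by simp, fun i hi => absurd hi (Nat.not_lt_zero i)⟩⟩
  | succ k =>
  obtain ⟨ι, _, hHJ⟩ := Line.exists_mono_in_high_dimension (Fin (k + 1)) (Fin r)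
  refine ⟨k * Fintype.card ι + 1, fun χ => ?_⟩
  have hsum : ∀ v : ι → Fin (k + 1), ∑ i, (v i : ℕ) < k * Fintype.card ι + 1 := by
    intro v
    have := sum_le_card_nsmul univ (fun i => (v i : ℕ)) k fun i _ => Nat.lt_succ_iff.mp (v i).isLt
    rw [card_univ, smul_eq_mul] at this
    linarith
  obtain ⟨l, c, hl⟩ := hHJ fun v => χ ⟨∑ i, (v i : ℕ), hsum v⟩
  set a := ∑ i, ((l.idxFun i).map Fin.val).getD 0
  set d := #{i | l.idxFun i = none}
  have hd : 0 < d := card_pos.mpr <| l.proper.imp fun i hi => by simpa using hi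
  have hAP : ∀ (x : Fin (k + 1)) (h : a + x * d < k * Fintype.card ι + 1),
      χ ⟨a + x * d, h⟩ = c := by
    intro x _
    rw [← hl x]
    congr 1
    ext
    exact (l.sum_val_apply x).symm
  have hlast : a + k * d < k * Fintype.card ι + 1 := by
    have := hsum (l (Fin.last k))
    rwa [l.sum_val_apply, Fin.val_last] at this
  refine ⟨a, d, hd, hlast, fun i hi => ?_⟩
  rw [hAP ⟨i, hi⟩, ← hAP 0 (by simp only [Fin.val_zero]; omega)]
  simp

theorem hasVdW_W (k r : ℕ) : hasVdW (W k r) k r :=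
  Nat.sInf_mem (exists_hasVdW k r)

theorem lt_W_of_not_monoAP {N k r : ℕ} (χ : Fin N → Fin r) (h : ¬ monoAP χ k) : N < W k r := by
  by_contra! hle
  exact h ((hasVdW_W k r).mono hle χ)

theorem vdW_four_two_gt_34 : ¬ monoAP rabungW42 4 ∧ 34 < W 4 2 :=
  ⟨not_monoAP_rabungW42, lt_W_of_not_monoAP rabungW42 not_monoAP_rabungW42⟩
end

section
/- Lower bound via the ring (cyclic) construction: if χ : ZMod n → Fin s has no monochromatic k-term arithmetic progression taken modulo n (with common difference a unit of ZMod n would suffice: assume no monochromatic progression a, a+c, ..., a+(k-1)c in ZMod n with c ≠ 0), and ψ : Fin m → Fin t has no monochromatic k-term arithmetic progression in {0,...,m-1}, then the coloring φ : Fin (n·m) → Fin s × Fin t defined by φ(i) = (χ(i mod n), ψ(i / n))—where i mod n is taken in ZMod n—has no monochromatic k-term arithmetic progression in {0,...,nm-1}, provided every prime divisor of n exceeds k. -/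
/-!
A monochromatic progression `a, a + d, …` for the product coloring is monochromatic for both
factors. If `n ∣ d`, say `d = n e`, then dividing by `n` gives a monochromatic progression
`a / n, a / n + e, …` for `ψ`; otherwise `d` is nonzero in `ZMod n` and reducing mod `n` gives
a monochromatic cyclic progression for `χ`.
-/

def IsMonoAPAt {N : ℕ} {α : Type*} (χ : Fin N → α) (k a d : ℕ) : Prop :=
  ∃ h : a + (k - 1) * d < N,
    ∀ i : ℕ, ∀ hi : i < k,
      χ ⟨a + i * d, by
        have hle : i * d ≤ (k - 1) * d := Nat.mul_le_mul_right d (by omega)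
        omega⟩ = χ ⟨a, by omega⟩

def blockColoring {m : ℕ} {β : Type*} (n : ℕ) (ψ : Fin m → β) : Fin (n * m) → β :=
  fun i => ψ ⟨i.val / n, Nat.div_lt_of_lt_mul i.isLt⟩

section

variable {N k a d : ℕ} {α β : Type*}

theorem monoAP_iff_exists_isMonoAPAt (χ : Fin N → α) :
    monoAP χ k ↔ ∃ a d, 0 < d ∧ IsMonoAPAt χ k a d :=
  Iff.rfl

theorem IsMonoAPAt.comp {χ : Fin N → α} (h : IsMonoAPAt χ k a d) (g : α → β) :
    IsMonoAPAt (g ∘ χ) k a d :=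
  ⟨h.1, fun i hi => congrArg g (h.2 i hi)⟩

theorem IsMonoAPAt.of_blockColoring {n m e : ℕ} {ψ : Fin m → β}
    (h : IsMonoAPAt (blockColoring n ψ) k a (n * e)) : IsMonoAPAt ψ k (a / n) e := by
  obtain ⟨hlt, hmono⟩ := h
  have hn : 0 < n := Nat.pos_of_ne_zero fun hn => by simp [hn] at hlt
  have hdiv : ∀ i, (a + i * (n * e)) / n = a / n + i * e := fun i => by
    rw [mul_left_comm, Nat.add_mul_div_left _ _ hn]
  refine ⟨?_, fun i hi => ?_⟩
  · rw [← hdiv, Nat.div_lt_iff_lt_mul hn, mul_comm m]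
    exact hlt
  · simpa only [blockColoring, hdiv] using hmono i hi

theorem IsMonoAPAt.natCast_zmod {n : ℕ} {χ : ZMod n → α}
    (h : IsMonoAPAt (fun i : Fin N => χ (i.val : ZMod n)) k a d) :
    ∀ i : ℕ, i < k → χ ((a : ZMod n) + (i : ZMod n) * d) = χ a := fun i hi => by
  simpa only [Nat.cast_add, Nat.cast_mul] using h.2 i hi

end

theorem ring_product_construction (k n m s t : ℕ)
    (χ : ZMod n → Fin s)
    (hχ : ¬ ∃ a c : ZMod n, c ≠ 0 ∧
        ∀ i : ℕ, i < k → χ (a + (i : ZMod n) * c) = χ a)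
    (ψ : Fin m → Fin t) (hψ : ¬ monoAP ψ k) :
    ¬ monoAP (fun i : Fin (n * m) =>
        ((χ ((i.val : ZMod n)),
          ψ ⟨i.val / n, by
            have hi := i.isLt
            rcases Nat.eq_zero_or_pos n with h | h
            · subst h; simp at hi
            · exact (Nat.div_lt_iff_lt_mul h).mpr
                (Nat.lt_of_lt_of_eq hi (Nat.mul_comm n m))⟩) : Fin s × Fin t)) k := by
  rw [monoAP_iff_exists_isMonoAPAt]
  rintro ⟨a, d, hd, hAP⟩
  by_cases hdvd : n ∣ d
  · obtain ⟨e, rfl⟩ := hdvd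
    have he : 0 < e := Nat.pos_of_mul_pos_left hd
    exact hψ ⟨a / n, e, he, (hAP.comp Prod.snd).of_blockColoring⟩
  · have hd_ne : (d : ZMod n) ≠ 0 := mt (ZMod.natCast_eq_zero_iff d n).mp hdvd
    exact hχ ⟨a, d, hd_ne, (hAP.comp Prod.fst).natCast_zmod⟩
end
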